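/- Difference-of-risks identity for SPO+: if c̄ satisfies the stationarity condition E_c[w*(c)] = E_c[w*(2c̄ − c)], then for any Δ ∈ ℝ^d, R_SPO+(c̄ + Δ) − R_SPO+(c̄) = E_c[(c − 2c̄ − 2Δ)ᵀ(w*(2c̄ + 2Δ − c) − w*(2c̄ − c))], which is nonnegative; hence c̄ is a global minimizer of R_SPO+. -/
import Mathlib


open MeasureTheory Set

noncomputable section

/-- Dot product on `Fin d → ℝ`. -/
def dotp {d : ℕ} (c w : Fin d → ℝ) : ℝ := ∑ i, c i * w i

/-- Optimal value `z*(c) = min_{w ∈ S} cᵀw`. -/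
def zS {d : ℕ} (S : Set (Fin d → ℝ)) (c : Fin d → ℝ) : ℝ := sInf ((fun w => dotp c w) '' S)

/-- Support function `ξ_S(c) = max_{w ∈ S} cᵀw`. -/
def xiS {d : ℕ} (S : Set (Fin d → ℝ)) (c : Fin d → ℝ) : ℝ := sSup ((fun w => dotp c w) '' S)

/-- Optimal solution set `W*(c) = argmin_{w ∈ S} cᵀw`. -/
def WS {d : ℕ} (S : Set (Fin d → ℝ)) (c : Fin d → ℝ) : Set (Fin d → ℝ) :=
  {w | w ∈ S ∧ ∀ u ∈ S, dotp c w ≤ dotp c u}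

/-- SPO loss `ℓ_SPO(ĉ, c) = max_{w ∈ W*(ĉ)} cᵀw − z*(c)`. -/
def lSPO {d : ℕ} (S : Set (Fin d → ℝ)) (chat c : Fin d → ℝ) : ℝ :=
  sSup ((fun w => dotp c w) '' WS S chat) - zS S c

/-- SPO+ loss `ℓ_SPO+(ĉ, c) = ξ_S(c − 2ĉ) + 2ĉᵀw*(c) − z*(c)` given a selection `wstar`. -/
def lSPOp {d : ℕ} (S : Set (Fin d → ℝ)) (wstar : (Fin d → ℝ) → (Fin d → ℝ))
    (chat c : Fin d → ℝ) : ℝ :=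
  xiS S (c - (2 : ℝ) • chat) + 2 * dotp chat (wstar c) - zS S c

-- helper lemmas
lemma dotp_add_left {d : ℕ} (a b w : Fin d → ℝ) : dotp (a + b) w = dotp a w + dotp b w := by
  simp [dotp, add_mul, Finset.sum_add_distrib]

lemma dotp_sub_left {d : ℕ} (a b w : Fin d → ℝ) : dotp (a - b) w = dotp a w - dotp b w := by
  simp [dotp, sub_mul, Finset.sum_sub_distrib]

lemma dotp_smul_left {d : ℕ} (r : ℝ) (a w : Fin d → ℝ) : dotp (r • a) w = r * dotp a w := by
  simp [dotp, Finset.mul_sum, mul_assoc]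

lemma dotp_sub_right {d : ℕ} (a x y : Fin d → ℝ) : dotp a (x - y) = dotp a x - dotp a y := by
  simp [dotp, mul_sub, Finset.sum_sub_distrib]

lemma dotp_neg_left {d : ℕ} (a w : Fin d → ℝ) : dotp (-a) w = - dotp a w := by
  simp [dotp]

lemma dotp_single {d : ℕ} (j : Fin d) (w : Fin d → ℝ) : dotp (Pi.single j 1) w = w j := by
  simp [dotp, Pi.single_apply]

lemma abs_dotp_le {d : ℕ} {R : ℝ} {w : Fin d → ℝ} (hw : ‖w‖ ≤ R) (u : Fin d → ℝ) :
    |dotp u w| ≤ (d * R) * ‖u‖ := by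
  calc |dotp u w| ≤ ∑ i, |u i * w i| := Finset.abs_sum_le_sum_abs _ _
    _ ≤ ∑ _i : Fin d, ‖u‖ * R := by
        refine Finset.sum_le_sum fun i _ => ?_
        rw [abs_mul]
        have h1 : |u i| ≤ ‖u‖ := by
          simpa using norm_le_pi_norm u i
        have h2 : |w i| ≤ R := by
          have := norm_le_pi_norm w i
          simp only [Real.norm_eq_abs] at this
          linarith
        have h0 : (0:ℝ) ≤ |u i| := abs_nonneg _
        nlinarith [norm_nonneg u, abs_nonneg (w i)]
    _ = (d * R) * ‖u‖ := by
        simp [Finset.sum_const, Finset.card_univ]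
        ring

lemma dotp_continuous {d : ℕ} (v : Fin d → ℝ) : Continuous fun w : Fin d → ℝ => dotp v w := by
  unfold dotp
  exact continuous_finset_sum _ fun i _ => (continuous_const.mul (continuous_apply i))

lemma xiS_zS_cont {d : ℕ} {S : Set (Fin d → ℝ)} (hS : S.Nonempty) (hSc : IsCompact S) :
    Continuous (xiS S) ∧ Continuous (zS S) := by
  obtain ⟨R, hR⟩ := isBounded_iff_forall_norm_le.1 hSc.isBounded
  have hR0 : (0:ℝ) ≤ R := le_trans (norm_nonneg _) (hR _ hS.choose_spec)
  set K : ℝ := d * R with hK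
  have hK0 : 0 ≤ K := by positivity
  have hne : ∀ v : Fin d → ℝ, ((fun w => dotp v w) '' S).Nonempty := fun v => hS.image _
  have hbdd : ∀ v : Fin d → ℝ, BddAbove ((fun w => dotp v w) '' S) :=
    fun v => (hSc.image (dotp_continuous v)).bddAbove
  have hbddb : ∀ v : Fin d → ℝ, BddBelow ((fun w => dotp v w) '' S) :=
    fun v => (hSc.image (dotp_continuous v)).bddBelow
  have hxile : ∀ v₁ v₂ : Fin d → ℝ, xiS S v₁ ≤ xiS S v₂ + K * dist v₁ v₂ := by
    intro v₁ v₂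
    refine csSup_le (hne v₁) ?_
    rintro x ⟨w, hwS, rfl⟩
    have h1 : dotp v₁ w = dotp v₂ w + dotp (v₁ - v₂) w := by rw [dotp_sub_left]; ring
    have h2 : dotp v₂ w ≤ xiS S v₂ := le_csSup (hbdd v₂) ⟨w, hwS, rfl⟩
    have h3 : |dotp (v₁ - v₂) w| ≤ K * ‖v₁ - v₂‖ := abs_dotp_le (hR w hwS) _
    rw [dist_eq_norm]
    have := abs_le.1 h3
    linarith [this.2]
  have hzle : ∀ v₁ v₂ : Fin d → ℝ, zS S v₁ ≤ zS S v₂ + K * dist v₁ v₂ := by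
    intro v₁ v₂
    have : zS S v₁ - K * dist v₁ v₂ ≤ zS S v₂ := by
      refine le_csInf (hne v₂) ?_
      rintro x ⟨w, hwS, rfl⟩
      have h1 : zS S v₁ ≤ dotp v₁ w := csInf_le (hbddb v₁) ⟨w, hwS, rfl⟩
      have h2 : dotp v₁ w = dotp v₂ w + dotp (v₁ - v₂) w := by rw [dotp_sub_left]; ring
      have h3 : |dotp (v₁ - v₂) w| ≤ K * ‖v₁ - v₂‖ := abs_dotp_le (hR w hwS) _
      rw [dist_eq_norm]
      have := abs_le.1 h3
      linarith [this.2]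
    linarith
  have hlip : ∀ (f : (Fin d → ℝ) → ℝ), (∀ v₁ v₂, f v₁ ≤ f v₂ + K * dist v₁ v₂) → Continuous f := by
    intro f hf
    refine (LipschitzWith.of_dist_le_mul (K := K.toNNReal) (f := f) ?_).continuous
    intro x y
    rw [Real.dist_eq, Real.coe_toNNReal _ hK0]
    have h1 := hf x y
    have h2 := hf y x
    rw [dist_comm y x] at h2
    rw [abs_le]
    constructor <;> linarith
  exact ⟨hlip _ hxile, hlip _ hzle⟩

lemma aesm_pi {Ω : Type*} [MeasurableSpace Ω] {μ : Measure Ω} {d : ℕ} {f : Ω → Fin d → ℝ}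
    (h : ∀ j, AEStronglyMeasurable (fun ω => f ω j) μ) : AEStronglyMeasurable f μ := by
  have h' : ∀ j, AEMeasurable (fun ω => f ω j) μ := fun j => (h j).aemeasurable
  choose g hgm hge using h'
  refine (AEMeasurable.aestronglyMeasurable (⟨fun ω j => g j ω, measurable_pi_iff.2 hgm, ?_⟩ :
    AEMeasurable f μ))
  have : ∀ᵐ ω ∂μ, ∀ j, f ω j = g j ω := (ae_all_iff).2 hge
  filter_upwards [this] with ω hω
  funext j; exact hω j

lemma pointwise_key {d : ℕ} {S : Set (Fin d → ℝ)}
    (wstar : (Fin d → ℝ) → (Fin d → ℝ))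
    (hxi : ∀ v : Fin d → ℝ, xiS S v = dotp v (wstar (-v)))
    (cbar Δ c' : Fin d → ℝ) :
    lSPOp S wstar (cbar + Δ) c' - lSPOp S wstar cbar c' =
      dotp (c' - (2 : ℝ) • cbar - (2 : ℝ) • Δ)
        (wstar ((2 : ℝ) • cbar + (2 : ℝ) • Δ - c') - wstar ((2 : ℝ) • cbar - c')) +
      2 * dotp Δ (wstar c' - wstar ((2 : ℝ) • cbar - c')) := by
  have e1 : -(c' - (2 : ℝ) • (cbar + Δ)) = (2 : ℝ) • cbar + (2 : ℝ) • Δ - c' := by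
    funext i; simp [Pi.smul_apply, smul_eq_mul, mul_add]
  have e2 : -(c' - (2 : ℝ) • cbar) = (2 : ℝ) • cbar - c' := by
    funext i; simp
  have h1 := hxi (c' - (2 : ℝ) • (cbar + Δ))
  have h2 := hxi (c' - (2 : ℝ) • cbar)
  rw [e1] at h1
  rw [e2] at h2
  simp only [lSPOp, h1, h2]
  simp only [dotp_sub_left, dotp_sub_right, dotp_smul_left, dotp_add_left, smul_add]
  ring

/-- difference-of-risks identity for SPO+: under the stationarity condition
`E[w*(c)] = E[w*(2c̄ − c)]`, for any `Δ`,
`R_SPO+(c̄ + Δ) − R_SPO+(c̄) = E[(c − 2c̄ − 2Δ)ᵀ(w*(2c̄ + 2Δ − c) − w*(2c̄ − c))] ≥ 0`;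
hence `c̄` is a global minimizer of `R_SPO+`. -/
theorem spo_plus_risk_difference {d : ℕ} (S : Set (Fin d → ℝ))
    (hS : S.Nonempty) (hSc : IsCompact S)
    (wstar : (Fin d → ℝ) → (Fin d → ℝ)) (hw : ∀ v, wstar v ∈ WS S v)
    (hxi : ∀ v : Fin d → ℝ, xiS S v = dotp v (wstar (-v)))
    {Ω : Type*} [MeasurableSpace Ω] (μ : Measure Ω) [IsProbabilityMeasure μ]
    (c : Ω → Fin d → ℝ) (hc : Measurable c)
    (cbar : Fin d → ℝ)
    (hintRisk : ∀ chat : Fin d → ℝ, Integrable (fun ω => lSPOp S wstar chat (c ω)) μ)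
    (hintInc : ∀ Δ : Fin d → ℝ, Integrable (fun ω =>
      dotp (c ω - (2 : ℝ) • cbar - (2 : ℝ) • Δ)
        (wstar ((2 : ℝ) • cbar + (2 : ℝ) • Δ - c ω) - wstar ((2 : ℝ) • cbar - c ω))) μ)
    (hstat : (∫ ω, wstar (c ω) ∂μ) = ∫ ω, wstar ((2 : ℝ) • cbar - c ω) ∂μ) :
    (∀ Δ : Fin d → ℝ,
      (∫ ω, lSPOp S wstar (cbar + Δ) (c ω) ∂μ) - (∫ ω, lSPOp S wstar cbar (c ω) ∂μ) =
        ∫ ω, dotp (c ω - (2 : ℝ) • cbar - (2 : ℝ) • Δ)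
          (wstar ((2 : ℝ) • cbar + (2 : ℝ) • Δ - c ω) - wstar ((2 : ℝ) • cbar - c ω)) ∂μ ∧
      0 ≤ ∫ ω, dotp (c ω - (2 : ℝ) • cbar - (2 : ℝ) • Δ)
          (wstar ((2 : ℝ) • cbar + (2 : ℝ) • Δ - c ω) - wstar ((2 : ℝ) • cbar - c ω)) ∂μ) ∧
    (∀ chat : Fin d → ℝ,
      (∫ ω, lSPOp S wstar cbar (c ω) ∂μ) ≤ ∫ ω, lSPOp S wstar chat (c ω) ∂μ) := by
  obtain ⟨R, hR⟩ := isBounded_iff_forall_norm_le.1 hSc.isBounded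
  obtain ⟨hxiC, hzC⟩ := xiS_zS_cont hS hSc
  -- Step A: integrability of the cross term
  have hGint : ∀ Δ : Fin d → ℝ, Integrable (fun ω =>
      2 * dotp Δ (wstar (c ω) - wstar ((2 : ℝ) • cbar - c ω))) μ := by
    intro Δ
    have h0 := ((hintRisk (cbar + Δ)).sub (hintRisk cbar)).sub (hintInc Δ)
    refine h0.congr (Filter.Eventually.of_forall fun ω => ?_)
    have hpk := pointwise_key wstar hxi cbar Δ (c ω)
    simp only [Pi.sub_apply]
    linarith
  -- Step B: component measurability of wstar ∘ c
  have hf1j : ∀ j, AEStronglyMeasurable (fun ω => wstar (c ω) j) μ := by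
    intro j
    set e : Fin d → ℝ := Pi.single j 1 with he
    have heq : (fun ω => wstar (c ω) j) = fun ω =>
        (lSPOp S wstar e (c ω) - xiS S (c ω - (2 : ℝ) • e)
          + zS S (c ω)) * (1/2) := by
      funext ω; simp only [lSPOp, he, dotp_single]; ring
    rw [heq]
    have mxi : AEStronglyMeasurable (fun ω => xiS S (c ω - (2 : ℝ) • e)) μ :=
      (hxiC.measurable.comp (hc.sub measurable_const)).aestronglyMeasurable
    have mz : AEStronglyMeasurable (fun ω => zS S (c ω)) μ :=
      (hzC.measurable.comp hc).aestronglyMeasurable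
    exact (((hintRisk _).1.sub mxi).add mz).mul_const _
  -- Step C: integrability of wstar ∘ c
  have hf1 : Integrable (fun ω => wstar (c ω)) μ := by
    refine Integrable.mono' (integrable_const R) (aesm_pi hf1j)
      (Filter.Eventually.of_forall fun ω => hR _ (hw _).1)
  -- Step D: component integrability of the difference h
  have hhj : ∀ j, Integrable (fun ω => wstar (c ω) j - wstar ((2 : ℝ) • cbar - c ω) j) μ := by
    intro j
    have h2i := (hGint (Pi.single j 1 : Fin d → ℝ)).const_mul (2⁻¹ : ℝ)
    refine h2i.congr (Filter.Eventually.of_forall fun ω => ?_)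
    simp only [dotp_single, Pi.sub_apply]
    ring
  -- Step E: integrability of h (vector-valued)
  have hh : Integrable (fun ω => wstar (c ω) - wstar ((2 : ℝ) • cbar - c ω)) μ := by
    refine Integrable.mono' (integrable_const (R + R)) (aesm_pi fun j => ?_)
      (Filter.Eventually.of_forall fun ω => ?_)
    · refine (hhj j).1.congr (Filter.Eventually.of_forall fun ω => ?_)
      simp
    · exact le_trans (norm_sub_le _ _) (add_le_add (hR _ (hw _).1) (hR _ (hw _).1))
  -- Step F: integrability of wstar (2cbar - c)
  have hf2 : Integrable (fun ω => wstar ((2 : ℝ) • cbar - c ω)) μ := by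
    refine (hf1.sub hh).congr (Filter.Eventually.of_forall fun ω => ?_)
    simp
  -- Step G: the vector integral of h is 0
  have hinth0 : (∫ ω, (wstar (c ω) - wstar ((2 : ℝ) • cbar - c ω)) ∂μ) = 0 := by
    rw [integral_sub hf1 hf2, hstat, sub_self]
  -- Step H: component integrals are 0
  have hj0 : ∀ j, (∫ ω, (wstar (c ω) j - wstar ((2 : ℝ) • cbar - c ω) j) ∂μ) = 0 := by
    intro j
    have hcomm := (ContinuousLinearMap.proj (R := ℝ) (φ := fun _ : Fin d => ℝ) j).integral_comp_comm hh
    simp only [ContinuousLinearMap.proj_apply, Pi.sub_apply] at hcomm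
    rw [hcomm, hinth0]
    rfl
  -- Step I: cross term integral is 0
  have hG0 : ∀ Δ : Fin d → ℝ, (∫ ω,
      2 * dotp Δ (wstar (c ω) - wstar ((2 : ℝ) • cbar - c ω)) ∂μ) = 0 := by
    intro Δ
    have hrw : (fun ω => 2 * dotp Δ (wstar (c ω) - wstar ((2 : ℝ) • cbar - c ω))) =
        fun ω => ∑ j, (2 * Δ j) * (wstar (c ω) j - wstar ((2 : ℝ) • cbar - c ω) j) := by
      funext ω
      rw [dotp, Finset.mul_sum]
      exact Finset.sum_congr rfl fun j _ => by simp only [Pi.sub_apply]; ring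
    rw [hrw, integral_finset_sum _ (fun j _ => (hhj j).const_mul _)]
    refine Finset.sum_eq_zero fun j _ => ?_
    rw [integral_const_mul, hj0 j, mul_zero]
  -- main identity
  have hmain : ∀ Δ : Fin d → ℝ,
      (∫ ω, lSPOp S wstar (cbar + Δ) (c ω) ∂μ) - (∫ ω, lSPOp S wstar cbar (c ω) ∂μ) =
        ∫ ω, dotp (c ω - (2 : ℝ) • cbar - (2 : ℝ) • Δ)
          (wstar ((2 : ℝ) • cbar + (2 : ℝ) • Δ - c ω) - wstar ((2 : ℝ) • cbar - c ω)) ∂μ := by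
    intro Δ
    rw [← integral_sub (hintRisk _) (hintRisk _)]
    have hrw : (fun ω => lSPOp S wstar (cbar + Δ) (c ω) - lSPOp S wstar cbar (c ω)) =
        fun ω => dotp (c ω - (2 : ℝ) • cbar - (2 : ℝ) • Δ)
          (wstar ((2 : ℝ) • cbar + (2 : ℝ) • Δ - c ω) - wstar ((2 : ℝ) • cbar - c ω)) +
          2 * dotp Δ (wstar (c ω) - wstar ((2 : ℝ) • cbar - c ω)) :=
      funext fun ω => pointwise_key wstar hxi cbar Δ (c ω)
    rw [hrw, integral_add (hintInc Δ) (hGint Δ), hG0 Δ, add_zero]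
  -- nonnegativity
  have hnonneg : ∀ Δ : Fin d → ℝ, 0 ≤ ∫ ω, dotp (c ω - (2 : ℝ) • cbar - (2 : ℝ) • Δ)
      (wstar ((2 : ℝ) • cbar + (2 : ℝ) • Δ - c ω) - wstar ((2 : ℝ) • cbar - c ω)) ∂μ := by
    intro Δ
    refine integral_nonneg fun ω => ?_
    have harg : c ω - (2 : ℝ) • cbar - (2 : ℝ) • Δ =
        -((2 : ℝ) • cbar + (2 : ℝ) • Δ - c ω) := by
      funext i; simp [Pi.smul_apply]; ring
    simp only [harg, dotp_neg_left, dotp_sub_right, Pi.zero_apply]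
    have := (hw ((2 : ℝ) • cbar + (2 : ℝ) • Δ - c ω)).2 (wstar ((2 : ℝ) • cbar - c ω))
      (hw ((2 : ℝ) • cbar - c ω)).1
    linarith
  refine ⟨fun Δ => ⟨hmain Δ, hnonneg Δ⟩, fun chat => ?_⟩
  have h1 := hmain (chat - cbar)
  have h2 := hnonneg (chat - cbar)
  rw [show cbar + (chat - cbar) = chat by abel] at h1
  linarith
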